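/- (Uniform Yosida coercivity near interior points.) Let $\beta$ be a maximal monotone graph on $\mathbb{R}$ with $0\in\beta(0)$, let $I=[m-\delta_0,m+\delta_0']$ be a compact interval contained in the interior of $D(\beta)$ with $\delta_0>0$, and let $\beta_\varepsilon$ denote the Yosida regularizations, $\varepsilon\in(0,1)$. Then there exists $C_0>0$ such that $\beta_\varepsilon(r)(r-r_0)\ge\delta_0|\beta_\varepsilon(r)| - C_0$ for every $r\in\mathbb{R}$, every $r_0$ with $[r_0-\delta_0,r_0+\delta_0]\subset I$, and every $\varepsilon\in(0,1)$. -/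

import Mathlib

/-- A graph `B ⊆ ℝ × ℝ` is monotone. -/
def IsMonotoneGraph (B : Set (ℝ × ℝ)) : Prop :=
  ∀ p ∈ B, ∀ q ∈ B, 0 ≤ (p.1 - q.1) * (p.2 - q.2)

/-- A graph `B ⊆ ℝ × ℝ` is maximal monotone. -/
def IsMaximalMonotoneGraph (B : Set (ℝ × ℝ)) : Prop :=
  IsMonotoneGraph B ∧ ∀ B' : Set (ℝ × ℝ), IsMonotoneGraph B' → B ⊆ B' → B' = B

/-- The domain of a graph. -/
def GraphDomain (B : Set (ℝ × ℝ)) : Set ℝ := {x | ∃ y, (x, y) ∈ B}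

/-- Uniform Yosida coercivity near interior points: if `β` is maximal monotone with
`0 ∈ β(0)` and `I = [m - δ₀, m + δ₀'] ⊆ int D(β)` with `δ₀ > 0`, then there is `C₀ > 0` with
`β_ε(r)(r - r₀) ≥ δ₀ |β_ε(r)| - C₀` for every `r ∈ ℝ`, every `r₀` with
`[r₀ - δ₀, r₀ + δ₀] ⊆ I`, and every `ε ∈ (0,1)` (with `β_ε = (I - J_ε)/ε` the Yosida
regularization given by any resolvent `J_ε`). -/
theorem yosida_uniform_coercivity (B : Set (ℝ × ℝ))
    (hB : IsMaximalMonotoneGraph B) (h00 : ((0 : ℝ), (0 : ℝ)) ∈ B)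
    (m δ₀ δ₀' : ℝ) (hδ₀ : 0 < δ₀)
    (hI : Set.Icc (m - δ₀) (m + δ₀') ⊆ interior (GraphDomain B)) :
    ∃ C₀ : ℝ, 0 < C₀ ∧ ∀ ε : ℝ, ε ∈ Set.Ioo (0 : ℝ) 1 → ∀ J : ℝ → ℝ,
      (∀ x : ℝ, (J x, (x - J x) / ε) ∈ B) →
      ∀ r r₀ : ℝ, Set.Icc (r₀ - δ₀) (r₀ + δ₀) ⊆ Set.Icc (m - δ₀) (m + δ₀') →
        δ₀ * |(r - J r) / ε| - C₀ ≤ ((r - J r) / ε) * (r - r₀) := by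
  by_cases hne : m - δ₀ ≤ m + δ₀'
  · obtain ⟨ym, hym⟩ : ∃ y, (m - δ₀, y) ∈ B :=
      interior_subset (s := GraphDomain B) (hI ⟨le_refl _, hne⟩)
    obtain ⟨yp, hyp⟩ : ∃ y, (m + δ₀', y) ∈ B :=
      interior_subset (s := GraphDomain B) (hI ⟨hne, le_refl _⟩)
    refine ⟨|ym| * |m - δ₀| + |yp| * |m + δ₀'| + 1, by positivity, ?_⟩
    intro ε hε J hJ r r₀ hr₀
    have hεpos : (0 : ℝ) < ε := hε.1
    set p := J r with hp
    set b := (r - J r) / ε with hb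
    have hr_eq : r - r₀ = ε * b + (p - r₀) := by
      have h1 : ε * b = r - J r := by rw [hb]; field_simp
      rw [h1, hp]; ring
    have h00' : 0 ≤ p * b := by
      have := hB.1 (p, b) (hJ r) (0, 0) h00
      simpa using this
    have hmono_p : 0 ≤ (p - (m + δ₀')) * (b - yp) := hB.1 (p, b) (hJ r) _ hyp
    have hmono_m : 0 ≤ (p - (m - δ₀)) * (b - ym) := hB.1 (p, b) (hJ r) _ hym
    have hlo : m - δ₀ ≤ r₀ - δ₀ := (hr₀ ⟨le_refl _, by linarith⟩).1
    have hhi : r₀ + δ₀ ≤ m + δ₀' := (hr₀ ⟨by linarith, le_refl _⟩).2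
    have hεb2 : 0 ≤ ε * (b * b) := mul_nonneg hεpos.le (mul_self_nonneg b)
    have hA : 0 ≤ |ym| * |m - δ₀| := mul_nonneg (abs_nonneg _) (abs_nonneg _)
    have hP : 0 ≤ |yp| * |m + δ₀'| := mul_nonneg (abs_nonneg _) (abs_nonneg _)
    rcases le_or_gt 0 b with hbs | hbs
    · rw [abs_of_nonneg hbs]
      rcases le_or_gt (r₀ + δ₀) p with hc | hc
      · nlinarith [mul_nonneg hbs (sub_nonneg.2 hc)]
      · have hbyp : b ≤ yp := by nlinarith
        have h1 : 0 ≤ b * (|m + δ₀'| - (r₀ + δ₀)) :=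
          mul_nonneg hbs (by linarith [le_abs_self (m + δ₀')])
        have h2 : 0 ≤ (|yp| - b) * |m + δ₀'| :=
          mul_nonneg (by linarith [le_abs_self yp]) (abs_nonneg _)
        nlinarith
    · rw [abs_of_neg hbs]
      rcases le_or_gt p (r₀ - δ₀) with hc | hc
      · nlinarith [mul_nonneg (neg_nonneg.2 hbs.le) (sub_nonneg.2 hc)]
      · have hbym : ym ≤ b := by nlinarith
        have h1 : 0 ≤ (-b) * ((r₀ - δ₀) + |m - δ₀|) :=
          mul_nonneg (by linarith) (by linarith [neg_abs_le (m - δ₀)])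
        have h2 : 0 ≤ (|ym| + b) * |m - δ₀| :=
          mul_nonneg (by linarith [neg_abs_le ym]) (abs_nonneg _)
        nlinarith
  · refine ⟨1, one_pos, ?_⟩
    intro ε hε J hJ r r₀ hr₀
    have : r₀ ∈ Set.Icc (m - δ₀) (m + δ₀') := hr₀ ⟨by linarith, by linarith⟩
    exact absurd (le_trans this.1 this.2) hne
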